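/- arXiv:hep-th/0504085 — 2 statements merged into one kernel-verified Lean document; each statement's English description precedes it below -/
import Mathlib

section
/- Let A be a complex unital Banach algebra and let α: [a,b] → A be continuous. Then the Dyson/expansional series g(t) = 1 + Σ_{m≥1} ∫_{a≤s₁≤⋯≤s_m≤t} α(s₁) α(s₂) ⋯ α(s_m) ds₁⋯ds_m converges absolutely for every t ∈ [a,b], with the norm of the m-th term bounded by (∫_a^t ‖α(s)‖ ds)^m / m!; the function g: [a,b] → A is continuously differentiable with g′(t) = g(t) α(t) for all t and g(a) = 1; and g is the unique continuously differentiable function [a,b] → A satisfying this initial value problem. -/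
/-!
Statement 14: the Dyson/expansional series (time-ordered exponential) in a complex
unital Banach algebra converges absolutely, solves the initial value problem
`g′(t) = g(t) α(t)`, `g(a) = 1`, and is the unique continuously differentiable
solution.
-/

open MeasureTheory
set_option linter.unusedSectionVars false
set_option maxHeartbeats 1000000

noncomputable section

/-- The ordered simplex `{p ≤ s₁ ≤ s₂ ≤ ⋯ ≤ s_m ≤ q}`. -/
def orderedSimplex (m : ℕ) (p q : ℝ) : Set (Fin m → ℝ) :=
  {s | (∀ i j : Fin m, i ≤ j → s i ≤ s j) ∧ ∀ i, s i ∈ Set.Icc p q}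

/-- The `m`-th term `∫_{p ≤ s₁ ≤ ⋯ ≤ s_m ≤ q} α(s₁) α(s₂) ⋯ α(s_m) ds₁⋯ds_m` of the
Dyson series, with the factors multiplied in time order. -/
def dysonTerm {A : Type} [NormedRing A] [NormedAlgebra ℂ A] [CompleteSpace A]
    (α : ℝ → A) (m : ℕ) (p q : ℝ) : A :=
  ∫ s in orderedSimplex m p q, (List.ofFn fun i => α (s i)).prod

section Aux
variable {A : Type} [NormedRing A] [NormedAlgebra ℂ A] [CompleteSpace A]
  {β : ℝ → A}

lemma simplex_isClosed (m : ℕ) (p q : ℝ) : IsClosed (orderedSimplex m p q) := by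
  have h1 : IsClosed {s : Fin m → ℝ | ∀ i j : Fin m, i ≤ j → s i ≤ s j} := by
    have : {s : Fin m → ℝ | ∀ i j : Fin m, i ≤ j → s i ≤ s j}
        = ⋂ (i : Fin m) (j : Fin m) (_ : i ≤ j), {s | s i ≤ s j} := by
      ext s; simp [Set.mem_iInter]
    rw [this]
    exact isClosed_iInter fun i => isClosed_iInter fun j => isClosed_iInter fun _ =>
      isClosed_le (continuous_apply i) (continuous_apply j)
  have h2 : IsClosed {s : Fin m → ℝ | ∀ i, s i ∈ Set.Icc p q} := by
    have : {s : Fin m → ℝ | ∀ i, s i ∈ Set.Icc p q}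
        = ⋂ (i : Fin m), (fun s : Fin m → ℝ => s i) ⁻¹' (Set.Icc p q) := by
      ext s; simp [Set.mem_iInter]
    rw [this]
    exact isClosed_iInter fun i => isClosed_Icc.preimage (continuous_apply i)
  exact h1.inter h2

lemma simplex_isCompact (m : ℕ) (p q : ℝ) : IsCompact (orderedSimplex m p q) := by
  refine (isCompact_univ_pi fun _ : Fin m => isCompact_Icc (a := p) (b := q)).of_isClosed_subset
    (simplex_isClosed m p q) ?_
  intro s hs
  exact fun i _ => hs.2 i

lemma prod_continuous (hβ : Continuous β) (m : ℕ) :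
    Continuous fun s : Fin m → ℝ => (List.ofFn fun i => β (s i)).prod := by
  have : (fun s : Fin m → ℝ => (List.ofFn fun i => β (s i)).prod)
      = fun s => ((List.finRange m).map fun i => β (s i)).prod := by
    funext s; rw [List.ofFn_eq_map]
  rw [this]
  exact continuous_list_prod _ fun i _ => hβ.comp (continuous_apply i)

lemma term_integrableOn (hβ : Continuous β) (m : ℕ) (p q : ℝ) :
    IntegrableOn (fun s : Fin m → ℝ => (List.ofFn fun i => β (s i)).prod)
      (orderedSimplex m p q) := by
  exact (prod_continuous hβ m).continuousOn.integrableOn_compact (simplex_isCompact m p q)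

lemma dysonTerm_zero (p q : ℝ) : dysonTerm β 0 p q = 1 := by
  have h : orderedSimplex 0 p q = Set.univ := by
    ext s; simp [orderedSimplex]
  rw [dysonTerm, h, setIntegral_univ]
  simp only [List.ofFn_zero, List.prod_nil]
  rw [integral_const]
  have : (volume : Measure (Fin 0 → ℝ)) Set.univ = 1 := by
    rw [MeasureTheory.volume_pi, Measure.pi_univ]; simp
  rw [measureReal_def, this]; simp


lemma snoc_mem_simplex_iff {m : ℕ} {p q t : ℝ} {y : Fin m → ℝ} :
    Fin.snoc (α := fun _ => ℝ) y t ∈ orderedSimplex (m+1) p q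
      ↔ t ∈ Set.Icc p q ∧ y ∈ orderedSimplex m p t := by
  constructor
  · rintro ⟨hm, hc⟩
    have ht : t ∈ Set.Icc p q := by simpa [Fin.snoc_last] using hc (Fin.last m)
    refine ⟨ht, ⟨fun i j hij => ?_, fun i => ?_⟩⟩
    · have := hm i.castSucc j.castSucc (by simpa using hij)
      simpa [Fin.snoc_castSucc] using this
    · refine ⟨by simpa [Fin.snoc_castSucc] using (hc i.castSucc).1, ?_⟩
      have := hm i.castSucc (Fin.last m) (Fin.le_last _)
      simpa [Fin.snoc_castSucc, Fin.snoc_last] using this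
  · rintro ⟨ht, hm, hc⟩
    constructor
    · intro i j hij
      induction j using Fin.lastCases with
      | last =>
        simp only [Fin.snoc_last]
        induction i using Fin.lastCases with
        | last => simp
        | cast i => simpa [Fin.snoc_castSucc] using (hc i).2
      | cast j =>
        induction i using Fin.lastCases with
        | last => exact absurd (lt_of_le_of_lt hij (Fin.castSucc_lt_last j)) (lt_irrefl _)
        | cast i =>
          have hij' : i ≤ j := by simpa using hij
          simpa [Fin.snoc_castSucc] using hm i j hij'
    · intro i
      induction i using Fin.lastCases with
      | last => simpa [Fin.snoc_last] using ht
      | cast i =>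
        refine ⟨by simpa [Fin.snoc_castSucc] using (hc i).1, ?_⟩
        have := (hc i).2
        simp only [Fin.snoc_castSucc]
        exact le_trans this ht.2

lemma prod_snoc (m : ℕ) (y : Fin m → ℝ) (t : ℝ) :
    (List.ofFn fun i : Fin (m+1) => β (Fin.snoc (α := fun _ => ℝ) y t i)).prod
      = (List.ofFn fun i : Fin m => β (y i)).prod * β t := by
  rw [List.ofFn_succ']
  simp [Fin.snoc_castSucc, Fin.snoc_last, List.concat_eq_append]

lemma piFinSuccAbove_symm_snoc (m : ℕ) (z : ℝ × (Fin m → ℝ)) :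
    (MeasurableEquiv.piFinSuccAbove (fun _ : Fin (m+1) => ℝ) (Fin.last m)).symm z
      = Fin.snoc (α := fun _ => ℝ) z.2 z.1 := by
  simp [MeasurableEquiv.piFinSuccAbove, Fin.insertNth_last', Fin.snocEquiv]

lemma dysonTerm_succ (hβ : Continuous β) (m : ℕ) {p q : ℝ} (hpq : p ≤ q) :
    dysonTerm β (m+1) p q = ∫ t in p..q, dysonTerm β m p t * β t := by
  classical
  set f : (Fin (m+1) → ℝ) → A := fun s => (List.ofFn fun i => β (s i)).prod with hf
  set S := orderedSimplex (m+1) p q with hSdef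
  have hS : MeasurableSet S := (simplex_isClosed _ _ _).measurableSet
  have hint : Integrable (S.indicator f) volume :=
    (term_integrableOn hβ (m+1) p q).integrable_indicator hS
  set e := MeasurableEquiv.piFinSuccAbove (fun _ : Fin (m+1) => ℝ) (Fin.last m) with he
  have mp := volume_preserving_piFinSuccAbove (fun _ : Fin (m+1) => ℝ) (Fin.last m)
  have h1 : ∫ s, S.indicator f s = ∫ z : ℝ × (Fin m → ℝ), S.indicator f (e.symm z) :=
    ((mp.symm e).integral_comp e.symm.measurableEmbedding _).symm
  have hint2 : Integrable (fun z : ℝ × (Fin m → ℝ) => S.indicator f (e.symm z)) volume := by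
    have := ((mp.symm e).integrable_comp_emb e.symm.measurableEmbedding (g := S.indicator f)).2 hint
    exact this
  have h2 : ∫ z : ℝ × (Fin m → ℝ), S.indicator f (e.symm z)
      = ∫ t : ℝ, ∫ y : Fin m → ℝ, S.indicator f (e.symm (t, y)) := by
    rw [show (volume : Measure (ℝ × (Fin m → ℝ))) = Measure.prod volume volume from
      Measure.volume_eq_prod _ _] at hint2 ⊢
    exact integral_prod _ hint2
  have h3 : ∀ t : ℝ, (∫ y : Fin m → ℝ, S.indicator f (e.symm (t, y)))
      = (Set.Icc p q).indicator (fun t => dysonTerm β m p t * β t) t := by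
    intro t
    by_cases ht : t ∈ Set.Icc p q
    · rw [Set.indicator_of_mem ht]
      have : ∀ y : Fin m → ℝ, S.indicator f (e.symm (t, y))
          = (orderedSimplex m p t).indicator
              (fun y => (List.ofFn fun i => β (y i)).prod * β t) y := by
        intro y
        rw [piFinSuccAbove_symm_snoc]
        by_cases hy : y ∈ orderedSimplex m p t
        · rw [Set.indicator_of_mem (snoc_mem_simplex_iff.2 ⟨ht, hy⟩), Set.indicator_of_mem hy]
          exact prod_snoc m y t
        · rw [Set.indicator_of_notMem (fun hmem => hy (snoc_mem_simplex_iff.1 hmem).2),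
            Set.indicator_of_notMem hy]
      rw [funext this, integral_indicator (simplex_isClosed m p t).measurableSet]
      have L : A →L[ℝ] A := (ContinuousLinearMap.mul ℝ A).flip (β t)
      have := ((ContinuousLinearMap.mul ℝ A).flip (β t)).integral_comp_comm
        (term_integrableOn hβ m p t)
      simpa [dysonTerm] using this
    · have : ∀ y : Fin m → ℝ, S.indicator f (e.symm (t, y)) = 0 := by
        intro y
        rw [piFinSuccAbove_symm_snoc]
        exact Set.indicator_of_notMem (fun hmem => ht (snoc_mem_simplex_iff.1 hmem).1) _
      rw [funext this, Set.indicator_of_notMem ht]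
      simp
  calc dysonTerm β (m+1) p q = ∫ s, S.indicator f s := by
        rw [dysonTerm, integral_indicator hS]
    _ = ∫ t : ℝ, (Set.Icc p q).indicator (fun t => dysonTerm β m p t * β t) t := by
        rw [h1, h2]; exact integral_congr_ae (Filter.Eventually.of_forall h3)
    _ = ∫ t in Set.Icc p q, dysonTerm β m p t * β t := by
        rw [integral_indicator measurableSet_Icc]
    _ = ∫ t in p..q, dysonTerm β m p t * β t := by
        rw [integral_Icc_eq_integral_Ioc, intervalIntegral.integral_of_le hpq]


lemma dysonTerm_continuousOn (hβ : Continuous β) (m : ℕ) (a b : ℝ) :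
    ContinuousOn (fun t => dysonTerm β m a t) (Set.Icc a b) := by
  induction m with
  | zero => simpa [dysonTerm_zero] using (continuousOn_const :
      ContinuousOn (fun _ : ℝ => (1 : A)) (Set.Icc a b))
  | succ m ih =>
    rcases le_or_gt a b with hab | hab
    · have hint : IntegrableOn (fun s => dysonTerm β m a s * β s) (Set.Icc a b) :=
        (ih.mul hβ.continuousOn).integrableOn_compact isCompact_Icc
      refine (intervalIntegral.continuousOn_primitive_Icc hint).congr ?_
      intro t ht
      show dysonTerm β (m+1) a t = ∫ s in Set.Icc a t, dysonTerm β m a s * β s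
      rw [dysonTerm_succ hβ m ht.1, intervalIntegral.integral_of_le ht.1,
        ← integral_Icc_eq_integral_Ioc]
    · rw [Set.Icc_eq_empty (not_le.2 hab)]
      exact continuousOn_empty _

lemma dysonTerm_norm_le (hβ : Continuous β) {a b : ℝ} (hab : a ≤ b) :
    ∀ m : ℕ, ∀ t ∈ Set.Icc a b,
      ‖dysonTerm β (m+1) a t‖ ≤ (∫ s in a..t, ‖β s‖) ^ (m+1) / ((m+1).factorial : ℝ) := by
  have hB : ∀ s : ℝ, HasDerivAt (fun u => ∫ x in a..u, ‖β x‖) ‖β s‖ s := fun s =>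
    (hβ.norm.integral_hasStrictDerivAt a s).hasDerivAt
  have hBc : Continuous (fun u => ∫ x in a..u, ‖β x‖) := by
    refine continuous_iff_continuousAt.2 fun s => (hB s).continuousAt
  intro m
  induction m with
  | zero =>
    intro t ht
    have h1 : dysonTerm β 1 a t = ∫ s in a..t, β s := by
      rw [dysonTerm_succ hβ 0 ht.1]
      simp [dysonTerm_zero]
    rw [h1]
    simpa [Nat.factorial] using intervalIntegral.norm_integral_le_integral_norm ht.1
  | succ m ih =>
    intro t ht
    set B : ℝ → ℝ := fun u => ∫ x in a..u, ‖β x‖ with hBdef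
    have hBnn : ∀ x ∈ Set.Icc a b, 0 ≤ B x := fun x hx =>
      intervalIntegral.integral_nonneg hx.1 fun _ _ => norm_nonneg _
    have hrec : dysonTerm β (m+2) a t = ∫ s in a..t, dysonTerm β (m+1) a s * β s :=
      dysonTerm_succ hβ (m+1) ht.1
    have hc1 : ContinuousOn (fun s => ‖dysonTerm β (m+1) a s * β s‖) (Set.Icc a t) :=
      (((dysonTerm_continuousOn hβ (m+1) a b).mono
        (Set.Icc_subset_Icc_right ht.2)).mul (hβ.continuousOn)).norm
    have hi1 : IntervalIntegrable (fun s => ‖dysonTerm β (m+1) a s * β s‖) volume a t := by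
      exact ContinuousOn.intervalIntegrable (by rwa [Set.uIcc_of_le ht.1])
    have hi2 : IntervalIntegrable (fun s => B s ^ (m+1) / ((m+1).factorial : ℝ) * ‖β s‖)
        volume a t :=
      (Continuous.intervalIntegrable (by continuity) a t)
    have step1 : ‖dysonTerm β (m+2) a t‖ ≤ ∫ s in a..t, ‖dysonTerm β (m+1) a s * β s‖ := by
      rw [hrec]
      exact intervalIntegral.norm_integral_le_integral_norm ht.1
    have step2 : (∫ s in a..t, ‖dysonTerm β (m+1) a s * β s‖)
        ≤ ∫ s in a..t, B s ^ (m+1) / ((m+1).factorial : ℝ) * ‖β s‖ := by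
      refine intervalIntegral.integral_mono_on ht.1 hi1 hi2 fun x hx => ?_
      have hxab : x ∈ Set.Icc a b := ⟨hx.1, le_trans hx.2 ht.2⟩
      calc ‖dysonTerm β (m+1) a x * β x‖ ≤ ‖dysonTerm β (m+1) a x‖ * ‖β x‖ := norm_mul_le _ _
        _ ≤ B x ^ (m+1) / ((m+1).factorial : ℝ) * ‖β x‖ :=
            mul_le_mul_of_nonneg_right (ih x hxab) (norm_nonneg _)
    have hphi : ∀ s : ℝ, HasDerivAt (fun u => B u ^ (m+2) / ((m+2).factorial : ℝ))
        (B s ^ (m+1) / ((m+1).factorial : ℝ) * ‖β s‖) s := by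
      intro s
      have h1 : HasDerivAt (fun u => B u ^ (m+2)) ((m+2 : ℕ) * B s ^ (m+1) * ‖β s‖) s :=
        (hB s).pow (m+2)
      have h2 := h1.div_const ((m+2).factorial : ℝ)
      refine h2.congr_deriv ?_
      have hfac : ((m+2).factorial : ℝ) = (m+2 : ℕ) * ((m+1).factorial : ℝ) := by
        rw [Nat.factorial_succ]; push_cast; ring
      rw [hfac]
      have hne1 : ((m+1).factorial : ℝ) ≠ 0 := Nat.cast_ne_zero.2 (Nat.factorial_ne_zero _)
      have hne2 : ((m+2 : ℕ) : ℝ) ≠ 0 := by positivity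
      field_simp
    have step3 : (∫ s in a..t, B s ^ (m+1) / ((m+1).factorial : ℝ) * ‖β s‖)
        = B t ^ (m+2) / ((m+2).factorial : ℝ) := by
      have := intervalIntegral.integral_eq_sub_of_hasDerivAt
        (f := fun u => B u ^ (m+2) / ((m+2).factorial : ℝ))
        (fun x _ => hphi x) hi2
      have hBa : B a = 0 := by simp [hBdef]
      rw [this]
      simp [hBa]
    calc ‖dysonTerm β (m+2) a t‖
        ≤ ∫ s in a..t, ‖dysonTerm β (m+1) a s * β s‖ := step1
      _ ≤ ∫ s in a..t, B s ^ (m+1) / ((m+1).factorial : ℝ) * ‖β s‖ := step2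
      _ = B t ^ (m+2) / ((m+2).factorial : ℝ) := step3

end Aux

/-- The time-ordered exponential
`Te^{∫_p^q α(s)ds} = 1 + Σ_{m≥1} ∫_{p≤s₁≤⋯≤s_m≤q} α(s₁)⋯α(s_m) ds₁⋯ds_m`. -/
def dysonExp {A : Type} [NormedRing A] [NormedAlgebra ℂ A] [CompleteSpace A]
    (α : ℝ → A) (p q : ℝ) : A :=
  1 + ∑' m : ℕ, dysonTerm α (m + 1) p q

/-- **The Dyson series.**  Let `A` be a complex unital Banach algebra and
`α : [a,b] → A` continuous.  Then the Dyson series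
`g(t) = 1 + Σ_{m≥1} ∫_{a≤s₁≤⋯≤s_m≤t} α(s₁)⋯α(s_m) ds` converges absolutely, the `m`-th
term being bounded in norm by `(∫_a^t ‖α(s)‖ ds)^m / m!`; the function `g` satisfies
`g(a) = 1` and is continuously differentiable on `[a,b]` with `g′(t) = g(t) α(t)`; and
`g` is the unique continuously differentiable solution of this initial value
problem. -/
theorem dyson_series
    {A : Type} [NormedRing A] [NormedAlgebra ℂ A] [CompleteSpace A]
    (a b : ℝ) (hab : a ≤ b) (α : ℝ → A) (hα : ContinuousOn α (Set.Icc a b)) :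
    (∀ t ∈ Set.Icc a b, ∀ m : ℕ, 1 ≤ m →
      ‖dysonTerm α m a t‖ ≤ (∫ s in a..t, ‖α s‖) ^ m / (m.factorial : ℝ)) ∧
    (∀ t ∈ Set.Icc a b, Summable fun m : ℕ => ‖dysonTerm α (m + 1) a t‖) ∧
    dysonExp α a a = 1 ∧
    (∀ t ∈ Set.Icc a b,
      HasDerivWithinAt (fun u => dysonExp α a u) (dysonExp α a t * α t)
        (Set.Icc a b) t) ∧
    ContinuousOn (fun t => dysonExp α a t * α t) (Set.Icc a b) ∧
    (∀ h : ℝ → A, h a = 1 →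
      (∀ t ∈ Set.Icc a b, HasDerivWithinAt h (h t * α t) (Set.Icc a b) t) →
      ∀ t ∈ Set.Icc a b, h t = dysonExp α a t) := by
  classical
  -- extend α to a globally continuous bounded function β
  set β : ℝ → A := Set.IccExtend hab (fun x : Set.Icc a b => α x) with hβdef
  have hβα : ∀ x ∈ Set.Icc a b, β x = α x := fun x hx => by
    simp [hβdef, Set.IccExtend_of_mem hab _ hx]
  have hβ : Continuous β :=
    Continuous.Icc_extend' (continuousOn_iff_continuous_restrict.1 hα)
  obtain ⟨M0, hM0⟩ := isCompact_Icc.exists_bound_of_continuousOn hα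
  set M : ℝ := max M0 0 with hMdef
  have hMnn : 0 ≤ M := le_max_right _ _
  have hM : ∀ t : ℝ, ‖β t‖ ≤ M := by
    intro t
    have hmem : (Set.projIcc a b hab t : ℝ) ∈ Set.Icc a b := (Set.projIcc a b hab t).2
    calc ‖β t‖ = ‖α (Set.projIcc a b hab t : ℝ)‖ := rfl
      _ ≤ M0 := hM0 _ hmem
      _ ≤ M := le_max_left _ _
  set L : ℝ := ∫ s in a..b, ‖β s‖ with hLdef
  have hL0 : 0 ≤ L := intervalIntegral.integral_nonneg hab fun _ _ => norm_nonneg _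
  set K : ℝ := max 1 ‖(1 : A)‖ with hKdef
  have hK1 : (1 : ℝ) ≤ K := le_max_left _ _
  have hK0 : (0 : ℝ) ≤ K := le_trans zero_le_one hK1
  have hβint : ∀ p q : ℝ, IntervalIntegrable (fun s => ‖β s‖) volume p q :=
    fun p q => (hβ.norm).intervalIntegrable p q
  have hBnn : ∀ t ∈ Set.Icc a b, 0 ≤ ∫ s in a..t, ‖β s‖ := fun t ht =>
    intervalIntegral.integral_nonneg ht.1 fun _ _ => norm_nonneg _
  have hBle : ∀ t ∈ Set.Icc a b, (∫ s in a..t, ‖β s‖) ≤ L := by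
    intro t ht
    have hsplit : (∫ s in a..t, ‖β s‖) + ∫ s in t..b, ‖β s‖ = L :=
      intervalIntegral.integral_add_adjacent_intervals (hβint a t) (hβint t b)
    have h2 : 0 ≤ ∫ s in t..b, ‖β s‖ :=
      intervalIntegral.integral_nonneg ht.2 fun _ _ => norm_nonneg _
    linarith
  -- uniform bound on the terms
  have hbound : ∀ m : ℕ, ∀ t ∈ Set.Icc a b,
      ‖dysonTerm β m a t‖ ≤ K * (L ^ m / (m.factorial : ℝ)) := by
    intro m t ht
    cases m with
    | zero =>
      rw [dysonTerm_zero, hKdef]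
      simpa using le_max_right (1:ℝ) ‖(1:A)‖
    | succ m =>
      have h1 := dysonTerm_norm_le hβ hab m t ht
      have h2 : (∫ s in a..t, ‖β s‖) ^ (m+1) ≤ L ^ (m+1) :=
        pow_le_pow_left₀ (hBnn t ht) (hBle t ht) _
      have h3 : (0:ℝ) < ((m+1).factorial : ℝ) := by positivity
      calc ‖dysonTerm β (m+1) a t‖
          ≤ (∫ s in a..t, ‖β s‖) ^ (m+1) / ((m+1).factorial : ℝ) := h1
        _ ≤ L ^ (m+1) / ((m+1).factorial : ℝ) := by
            exact (div_le_div_iff_of_pos_right h3).2 h2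
        _ ≤ K * (L ^ (m+1) / ((m+1).factorial : ℝ)) :=
            le_mul_of_one_le_left (by positivity) hK1

  have hsum_u : Summable fun m : ℕ => K * (L ^ m / (m.factorial : ℝ)) :=
    (Real.summable_pow_div_factorial L).mul_left K
  have hTsummable : ∀ t ∈ Set.Icc a b, Summable fun m : ℕ => dysonTerm β m a t := by
    intro t ht
    exact Summable.of_norm_bounded hsum_u (fun m => hbound m t ht)
  set g : ℝ → A := fun t => ∑' m : ℕ, dysonTerm β m a t with hgdef
  have hg_exp : ∀ t ∈ Set.Icc a b, dysonExp β a t = g t := by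
    intro t ht
    rw [hgdef]
    simp only
    rw [Summable.tsum_eq_zero_add (hTsummable t ht), dysonTerm_zero, dysonExp]
  have hgc : ContinuousOn g (Set.Icc a b) :=
    continuousOn_tsum (fun m => dysonTerm_continuousOn hβ m a b) hsum_u
      (fun m t ht => hbound m t ht)
  have hfc : ContinuousOn (fun s => g s * β s) (Set.Icc a b) := hgc.mul hβ.continuousOn
  -- the integral equation
  have hTcont : ∀ (m : ℕ) (t : ℝ), t ∈ Set.Icc a b →
      IntegrableOn (fun s => dysonTerm β m a s * β s) (Set.Ioc a t) := by
    intro m t ht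
    have : IntegrableOn (fun s => dysonTerm β m a s * β s) (Set.Icc a t) :=
      (((dysonTerm_continuousOn hβ m a b).mono (Set.Icc_subset_Icc_right ht.2)).mul
        hβ.continuousOn).integrableOn_compact isCompact_Icc
    exact this.mono_set Set.Ioc_subset_Icc_self
  have heq : ∀ t ∈ Set.Icc a b, g t = 1 + ∫ s in a..t, g s * β s := by
    intro t ht
    have hta : 0 ≤ t - a := sub_nonneg.2 ht.1
    have hIccsub : Set.Icc a t ⊆ Set.Icc a b := Set.Icc_subset_Icc_right ht.2
    have hnormint : ∀ m : ℕ, (∫ s in Set.Ioc a t, ‖dysonTerm β m a s * β s‖)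
        ≤ (K * (L ^ m / (m.factorial : ℝ))) * (M * (t - a)) := by
      intro m
      have hc : IntegrableOn (fun s => ‖dysonTerm β m a s * β s‖) (Set.Ioc a t) :=
        (hTcont m t ht).norm
      have hconst : IntegrableOn (fun _ : ℝ => K * (L ^ m / (m.factorial : ℝ)) * M)
          (Set.Ioc a t) := integrableOn_const measure_Ioc_lt_top.ne
      calc (∫ s in Set.Ioc a t, ‖dysonTerm β m a s * β s‖)
          ≤ ∫ _s in Set.Ioc a t, K * (L ^ m / (m.factorial : ℝ)) * M := by
            refine setIntegral_mono_on hc hconst measurableSet_Ioc fun x hx => ?_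
            have hx' : x ∈ Set.Icc a b := hIccsub (Set.Ioc_subset_Icc_self hx)
            calc ‖dysonTerm β m a x * β x‖ ≤ ‖dysonTerm β m a x‖ * ‖β x‖ := norm_mul_le _ _
              _ ≤ K * (L ^ m / (m.factorial : ℝ)) * M :=
                  mul_le_mul (hbound m x hx') (hM x) (norm_nonneg _) (by positivity)
        _ = (K * (L ^ m / (m.factorial : ℝ))) * (M * (t - a)) := by
            rw [setIntegral_const, Real.volume_real_Ioc_of_le ht.1,
              smul_eq_mul]
            ring
    have hsum2 : Summable fun m : ℕ =>
        ∫ s in Set.Ioc a t, ‖dysonTerm β m a s * β s‖ := by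
      refine Summable.of_nonneg_of_le
        (fun m => setIntegral_nonneg measurableSet_Ioc fun x _ => norm_nonneg _)
        hnormint (hsum_u.mul_right (M * (t - a)))
    have hswap := integral_tsum_of_summable_integral_norm
      (F := fun m (s : ℝ) => dysonTerm β m a s * β s) (μ := volume.restrict (Set.Ioc a t))
      (fun m => hTcont m t ht) hsum2
    have hrecsum : ∑' m : ℕ, dysonTerm β (m+1) a t
        = ∑' m : ℕ, ∫ s in Set.Ioc a t, dysonTerm β m a s * β s := by
      refine tsum_congr fun m => ?_
      rw [dysonTerm_succ hβ m ht.1, intervalIntegral.integral_of_le ht.1]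
    have hinner : ∫ s in Set.Ioc a t, (∑' m : ℕ, dysonTerm β m a s * β s)
        = ∫ s in Set.Ioc a t, g s * β s := by
      refine setIntegral_congr_fun measurableSet_Ioc fun s hs => ?_
      have hs' : s ∈ Set.Icc a b := hIccsub (Set.Ioc_subset_Icc_self hs)
      exact (hTsummable s hs').tsum_mul_right (β s)
    have hgt : g t = 1 + ∑' m : ℕ, dysonTerm β (m+1) a t := by
      rw [hgdef]
      simp only
      rw [Summable.tsum_eq_zero_add (hTsummable t ht), dysonTerm_zero]
    rw [hgt, hrecsum, hswap, hinner, intervalIntegral.integral_of_le ht.1]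
  -- the derivative
  have hd : ∀ t ∈ Set.Icc a b,
      HasDerivWithinAt g (g t * β t) (Set.Icc a b) t := by
    intro t ht
    haveI : Fact (t ∈ Set.Icc a b) := ⟨ht⟩
    have hint : IntervalIntegrable (fun s => g s * β s) volume a t := by
      refine ContinuousOn.intervalIntegrable ?_
      rw [Set.uIcc_of_le ht.1]
      exact hfc.mono (Set.Icc_subset_Icc_right ht.2)
    have hmeas : StronglyMeasurableAtFilter (fun s => g s * β s)
        (nhdsWithin t (Set.Icc a b)) volume :=
      hfc.stronglyMeasurableAtFilter_nhdsWithin measurableSet_Icc t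
    have hG : HasDerivWithinAt (fun u => ∫ s in a..u, g s * β s) (g t * β t)
        (Set.Icc a b) t :=
      intervalIntegral.integral_hasDerivWithinAt_right hint hmeas (hfc t ht)
    have hG' : HasDerivWithinAt (fun u => 1 + ∫ s in a..u, g s * β s) (g t * β t)
        (Set.Icc a b) t := by
      exact hG.const_add 1
    exact hG'.congr (fun u hu => heq u hu) (heq t ht)
  -- transfer from β to α
  have htermeq : ∀ t ∈ Set.Icc a b, ∀ m : ℕ, dysonTerm α m a t = dysonTerm β m a t := by
    intro t ht m
    refine setIntegral_congr_fun (simplex_isClosed m a t).measurableSet fun s hs => ?_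
    have : (fun i : Fin m => α (s i)) = fun i => β (s i) := by
      funext i
      exact (hβα (s i) ⟨(hs.2 i).1, le_trans (hs.2 i).2 ht.2⟩).symm
    rw [this]
  have hexpeq : ∀ t ∈ Set.Icc a b, dysonExp α a t = dysonExp β a t := by
    intro t ht
    rw [dysonExp, dysonExp]
    congr 1
    exact tsum_congr fun m => htermeq t ht (m+1)
  have hnormeq : ∀ t ∈ Set.Icc a b, (∫ s in a..t, ‖α s‖) = ∫ s in a..t, ‖β s‖ := by
    intro t ht
    refine intervalIntegral.integral_congr fun s hs => ?_
    rw [Set.uIcc_of_le ht.1] at hs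
    rw [hβα s ⟨hs.1, le_trans hs.2 ht.2⟩]
  -- clause 3
  have hexpa : dysonExp α a a = 1 := by
    have haa : a ∈ Set.Icc a b := ⟨le_refl a, hab⟩
    have hzero : ∀ m : ℕ, dysonTerm α (m+1) a a = 0 := by
      intro m
      have hsub : orderedSimplex (m+1) a a ⊆ {fun _ => a} := by
        intro s hs
        have : s = fun _ => a := funext fun i => le_antisymm (hs.2 i).2 (hs.2 i).1
        simp [this]
      have hz : volume.restrict (orderedSimplex (m+1) a a) = 0 :=
        Measure.restrict_eq_zero.2 (measure_mono_null hsub (measure_singleton _))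
      rw [dysonTerm, hz, integral_zero_measure]
    rw [dysonExp]
    simp [hzero]
  refine ⟨?_, ?_, hexpa, ?_, ?_, ?_⟩
  · -- clause 1
    intro t ht m hm
    obtain ⟨k, rfl⟩ : ∃ k, m = k + 1 := ⟨m - 1, (Nat.succ_pred_eq_of_pos hm).symm⟩
    rw [htermeq t ht, hnormeq t ht]
    exact dysonTerm_norm_le hβ hab k t ht
  · -- clause 2
    intro t ht
    refine Summable.of_nonneg_of_le (fun m => norm_nonneg _) (fun m => ?_)
      (((Real.summable_pow_div_factorial L).mul_left K).comp_injective
        (add_left_injective 1))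
    rw [htermeq t ht]
    calc ‖dysonTerm β (m+1) a t‖ ≤ K * (L ^ (m+1) / ((m+1).factorial : ℝ)) :=
          hbound (m+1) t ht
      _ = (fun n : ℕ => K * (L ^ n / (n.factorial : ℝ))) ((fun n => n + 1) m) := rfl
  · -- clause 4
    intro t ht
    have := hd t ht
    have hEq : ∀ u ∈ Set.Icc a b, dysonExp α a u = g u := fun u hu =>
      (hexpeq u hu).trans (hg_exp u hu)
    have hd' : dysonExp α a t * α t = g t * β t := by
      rw [hexpeq t ht, hg_exp t ht, hβα t ht]
    rw [hd']
    exact this.congr (fun u hu => hEq u hu) (hEq t ht)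
  · -- clause 5
    refine hfc.congr fun t ht => ?_
    rw [hexpeq t ht, hg_exp t ht]; beta_reduce; rw [hβα t ht]
  · -- clause 6
    intro h h0 hh'
    have hMK : ∀ t : ℝ, LipschitzWith M.toNNReal (fun x : A => x * β t) := by
      intro t
      refine LipschitzWith.of_dist_le_mul fun x y => ?_
      rw [dist_eq_norm, dist_eq_norm]
      calc ‖x * β t - y * β t‖ = ‖(x - y) * β t‖ := by rw [sub_mul]
        _ ≤ ‖x - y‖ * ‖β t‖ := norm_mul_le _ _
        _ ≤ ‖x - y‖ * M := mul_le_mul_of_nonneg_left (hM t) (norm_nonneg _)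
        _ = (M.toNNReal : ℝ) * ‖x - y‖ := by
            rw [Real.coe_toNNReal _ hMnn]; ring
    have hga : g a = 1 := by
      have haa : a ∈ Set.Icc a b := ⟨le_refl a, hab⟩
      rw [← hg_exp a haa, ← hexpeq a haa, hexpa]
    have huniq : Set.EqOn h g (Set.Icc a b) := by
      refine ODE_solution_unique_of_mem_Icc_right
        (v := fun t x => x * β t) (s := fun _ => Set.univ) (K := M.toNNReal)
        (fun t _ => (hMK t).lipschitzOnWith)
        (fun t ht => (hh' t ht).continuousWithinAt) ?_ (fun _ _ => trivial)
        (fun t ht => (hd t ht).continuousWithinAt) ?_ (fun _ _ => trivial)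
        (h0.trans hga.symm)
      · intro t ht
        have h1 : HasDerivWithinAt h (h t * β t) (Set.Icc a b) t := by
          have := hh' t ⟨ht.1, le_of_lt ht.2⟩
          rwa [hβα t ⟨ht.1, le_of_lt ht.2⟩]
        exact h1.mono_of_mem_nhdsWithin (Icc_mem_nhdsGE_of_mem ht)
      · intro t ht
        exact (hd t ⟨ht.1, le_of_lt ht.2⟩).mono_of_mem_nhdsWithin
          (Icc_mem_nhdsGE_of_mem ht)
    intro t ht
    rw [huniq ht, ← hg_exp t ht, hexpeq t ht]

end
end

section
/- Let H be a commutative Hopf algebra over ℂ, let K be a commutative unital ℂ-algebra equipped with a ℂ-linear derivation δ, and let g: H → K be a ℂ-algebra homomorphism. Define g′ := δ ∘ g and the logarithmic derivative D(g) := (g ∘ S) ⋆ g′, where ⋆ is the convolution product. Then D(g) is an infinitesimal character of H with values in K; that is, D(g)(xy) = D(g)(x) ε(y) + ε(x) D(g)(y) for all x, y ∈ H. -/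
/-!
Statement 17: the logarithmic derivative `D(g) = (g ∘ S) ⋆ (δ ∘ g)` of an algebra
homomorphism `g : H → K` from a commutative Hopf algebra into a commutative algebra
with derivation `δ` is an infinitesimal character.
-/

open TensorProduct

noncomputable section

/-- Convolution product `φ ⋆ ψ = m_K ∘ (φ ⊗ ψ) ∘ Δ` of linear maps from a Hopf algebra
into a commutative algebra. -/
def conv {H K : Type} [CommRing H] [HopfAlgebra ℂ H] [CommRing K] [Algebra ℂ K]
    (f g : H →ₗ[ℂ] K) : H →ₗ[ℂ] K :=
  LinearMap.mul' ℂ K ∘ₗ TensorProduct.map f g ∘ₗ Coalgebra.comul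

/-- The logarithmic derivative `D(g) = (g ∘ S) ⋆ (δ ∘ g)` of an algebra homomorphism
`g : H → K` with respect to a derivation `δ` of `K`. -/
def hopfLogDeriv {H K : Type} [CommRing H] [HopfAlgebra ℂ H] [CommRing K] [Algebra ℂ K]
    (δ : Derivation ℂ K K) (g : H →ₐ[ℂ] K) : H →ₗ[ℂ] K :=
  conv (g.toLinearMap ∘ₗ HopfAlgebra.antipode (R := ℂ)) (δ.toLinearMap ∘ₗ g.toLinearMap)

namespace LogDerivAux
open Coalgebra

variable {K : Type} [CommRing K] [Algebra ℂ K]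

section Coalg
variable {C : Type} [AddCommGroup C] [Module ℂ C]

/-- convolution product -/
def cv [CoalgebraStruct ℂ C] (f g : C →ₗ[ℂ] K) : C →ₗ[ℂ] K :=
  LinearMap.mul' ℂ K ∘ₗ TensorProduct.map f g ∘ₗ Coalgebra.comul

/-- convolution unit -/
def cu [CoalgebraStruct ℂ C] : C →ₗ[ℂ] K :=
  Algebra.linearMap ℂ K ∘ₗ Coalgebra.counit

lemma cv_apply [CoalgebraStruct ℂ C] (f g : C →ₗ[ℂ] K) (x : C) :
    cv f g x = LinearMap.mul' ℂ K (TensorProduct.map f g (comul x)) := rfl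

lemma cv_add_right [CoalgebraStruct ℂ C] (f g h : C →ₗ[ℂ] K) :
    cv f (g + h) = cv f g + cv f h := by
  unfold cv
  ext x
  simp [TensorProduct.map_add_right]

lemma cv_assoc [Coalgebra ℂ C] (f g h : C →ₗ[ℂ] K) :
    cv (cv f g) h = cv f (cv g h) := by
  have key : LinearMap.mul' ℂ K ∘ₗ TensorProduct.map (LinearMap.mul' ℂ K ∘ₗ TensorProduct.map f g) h
        ∘ₗ ((TensorProduct.assoc ℂ C C C).symm : C ⊗[ℂ] (C ⊗[ℂ] C) →ₗ[ℂ] (C ⊗[ℂ] C) ⊗[ℂ] C)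
      = LinearMap.mul' ℂ K ∘ₗ TensorProduct.map f (LinearMap.mul' ℂ K ∘ₗ TensorProduct.map g h) := by
    ext x y z
    simp [mul_assoc]
  have decompL : TensorProduct.map (cv f g) h
      = (TensorProduct.map (LinearMap.mul' ℂ K ∘ₗ TensorProduct.map f g) h) ∘ₗ (comul (R := ℂ)).rTensor C := by
    rw [LinearMap.rTensor, ← TensorProduct.map_comp]
    rfl
  have decompR : TensorProduct.map f (cv g h)
      = (TensorProduct.map f (LinearMap.mul' ℂ K ∘ₗ TensorProduct.map g h)) ∘ₗ (comul (R := ℂ)).lTensor C := by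
    rw [LinearMap.lTensor, ← TensorProduct.map_comp]
    rfl
  ext x
  rw [cv_apply, cv_apply, decompL, decompR]
  simp only [LinearMap.comp_apply]
  rw [← Coalgebra.coassoc_symm_apply (R := ℂ) x]
  exact LinearMap.congr_fun key _

lemma cv_cu_left [Coalgebra ℂ C] (f : C →ₗ[ℂ] K) : cv cu f = f := by
  ext x
  have decomp : TensorProduct.map (cu (C := C) (K := K)) f
      = (TensorProduct.map (Algebra.linearMap ℂ K) f) ∘ₗ (counit (R := ℂ)).rTensor C := by
    rw [LinearMap.rTensor, ← TensorProduct.map_comp]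
    rfl
  rw [cv_apply, decomp]
  simp only [LinearMap.comp_apply]
  rw [Coalgebra.rTensor_counit_comul]
  simp [Algebra.algebraMap_eq_smul_one]

lemma cv_cu_right [Coalgebra ℂ C] (f : C →ₗ[ℂ] K) : cv f cu = f := by
  ext x
  have decomp : TensorProduct.map f (cu (C := C) (K := K))
      = (TensorProduct.map f (Algebra.linearMap ℂ K)) ∘ₗ (counit (R := ℂ)).lTensor C := by
    rw [LinearMap.lTensor, ← TensorProduct.map_comp]
    rfl
  rw [cv_apply, decomp]
  simp only [LinearMap.comp_apply]
  rw [Coalgebra.lTensor_counit_comul]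
  simp [Algebra.algebraMap_eq_smul_one, mul_comm]

end Coalg

section Tp

variable {C D : Type} [AddCommGroup C] [Module ℂ C] [AddCommGroup D] [Module ℂ D]

/-- "tensor product" of two K-valued maps, as a map on `C ⊗ D`. -/
def tp (a : C →ₗ[ℂ] K) (b : D →ₗ[ℂ] K) : C ⊗[ℂ] D →ₗ[ℂ] K :=
  LinearMap.mul' ℂ K ∘ₗ TensorProduct.map a b

@[simp] lemma tp_tmul (a : C →ₗ[ℂ] K) (b : D →ₗ[ℂ] K) (x : C) (y : D) :
    tp a b (x ⊗ₜ[ℂ] y) = a x * b y := rfl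

lemma cv_tp [CoalgebraStruct ℂ C] [CoalgebraStruct ℂ D]
    (a c : C →ₗ[ℂ] K) (b d : D →ₗ[ℂ] K) :
    cv (tp a b) (tp c d) = tp (cv a c) (cv b d) := by
  ext x y
  show LinearMap.mul' ℂ K (TensorProduct.map (tp a b) (tp c d)
      ((tensorTensorTensorComm ℂ C C D D) (comul x ⊗ₜ comul y))) = cv a c x * cv b d y
  rw [cv_apply, cv_apply]
  generalize comul (R := ℂ) x = s
  generalize comul (R := ℂ) y = t
  induction s using TensorProduct.induction_on with
  | zero => simp
  | tmul x1 x2 =>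
      induction t using TensorProduct.induction_on with
      | zero => simp
      | tmul y1 y2 => simp; ring
      | add t1 t2 ih1 ih2 => simp only [tmul_add, map_add, ih1, ih2, mul_add]
  | add s1 s2 ih1 ih2 => simp only [add_tmul, map_add, ih1, ih2, add_mul]

lemma cu_tp [CoalgebraStruct ℂ C] [CoalgebraStruct ℂ D] :
    (cu : C ⊗[ℂ] D →ₗ[ℂ] K) = tp cu cu := by
  ext x y
  show algebraMap ℂ K (counit (R := ℂ) y • counit (R := ℂ) x)
      = cu x * cu y
  simp [cu, map_mul, mul_comm]

end Tp

section Hopf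

variable {H : Type} [CommRing H] [HopfAlgebra ℂ H] (g : H →ₐ[ℂ] K)

lemma mulK_map_gg (t : H ⊗[ℂ] H) :
    LinearMap.mul' ℂ K (TensorProduct.map g.toLinearMap g.toLinearMap t)
      = g (LinearMap.mul' ℂ H t) := by
  induction t using TensorProduct.induction_on with
  | zero => simp
  | tmul x y => simp
  | add s t ihs iht => simp [ihs, iht]

lemma cv_sg_g :
    cv (g.toLinearMap ∘ₗ HopfAlgebra.antipode (R := ℂ)) g.toLinearMap = cu := by
  ext x
  rw [cv_apply]
  have decomp : TensorProduct.map (g.toLinearMap ∘ₗ HopfAlgebra.antipode (R := ℂ)) g.toLinearMap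
      = TensorProduct.map g.toLinearMap g.toLinearMap ∘ₗ
        (HopfAlgebra.antipode (R := ℂ)).rTensor H := by
    rw [LinearMap.rTensor, ← TensorProduct.map_comp, LinearMap.comp_id]
  rw [decomp, LinearMap.comp_apply, mulK_map_gg,
    HopfAlgebra.mul_antipode_rTensor_comul_apply]
  simp [cu]

lemma cv_g_sg :
    cv g.toLinearMap (g.toLinearMap ∘ₗ HopfAlgebra.antipode (R := ℂ)) = cu := by
  ext x
  rw [cv_apply]
  have decomp : TensorProduct.map g.toLinearMap (g.toLinearMap ∘ₗ HopfAlgebra.antipode (R := ℂ))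
      = TensorProduct.map g.toLinearMap g.toLinearMap ∘ₗ
        (HopfAlgebra.antipode (R := ℂ)).lTensor H := by
    rw [LinearMap.lTensor, ← TensorProduct.map_comp, LinearMap.comp_id]
  rw [decomp, LinearMap.comp_apply, mulK_map_gg,
    HopfAlgebra.mul_antipode_lTensor_comul_apply]
  simp [cu]

lemma g_comp_mul :
    g.toLinearMap ∘ₗ LinearMap.mul' ℂ H = tp g.toLinearMap g.toLinearMap := by
  ext x y
  simp [tp]

lemma mapmul_ttc (s t : H ⊗[ℂ] H) :
    TensorProduct.map (LinearMap.mul' ℂ H) (LinearMap.mul' ℂ H)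
      (tensorTensorTensorComm ℂ H H H H (s ⊗ₜ[ℂ] t)) = s * t := by
  induction s using TensorProduct.induction_on with
  | zero =>
      rw [TensorProduct.zero_tmul, (tensorTensorTensorComm ℂ H H H H).map_zero,
        (TensorProduct.map (LinearMap.mul' ℂ H) (LinearMap.mul' ℂ H)).map_zero, zero_mul]
  | tmul x1 x2 =>
      induction t using TensorProduct.induction_on with
      | zero =>
          rw [TensorProduct.tmul_zero, (tensorTensorTensorComm ℂ H H H H).map_zero,
            (TensorProduct.map (LinearMap.mul' ℂ H) (LinearMap.mul' ℂ H)).map_zero, mul_zero]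
      | tmul y1 y2 => simp [Algebra.TensorProduct.tmul_mul_tmul]
      | add t1 t2 ih1 ih2 => simp only [tmul_add, map_add, ih1, ih2, mul_add]
  | add s1 s2 ih1 ih2 => simp only [add_tmul, map_add, ih1, ih2, add_mul]

lemma cv_comp_mul (a b : H →ₗ[ℂ] K) :
    cv (a ∘ₗ LinearMap.mul' ℂ H) (b ∘ₗ LinearMap.mul' ℂ H)
      = (cv a b) ∘ₗ LinearMap.mul' ℂ H := by
  ext x y
  show LinearMap.mul' ℂ K (TensorProduct.map (a ∘ₗ LinearMap.mul' ℂ H) (b ∘ₗ LinearMap.mul' ℂ H)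
      (comul (R := ℂ) (x ⊗ₜ[ℂ] y))) = cv a b (x * y)
  have decomp : TensorProduct.map (a ∘ₗ LinearMap.mul' ℂ H) (b ∘ₗ LinearMap.mul' ℂ H)
      = TensorProduct.map a b ∘ₗ
        TensorProduct.map (LinearMap.mul' ℂ H) (LinearMap.mul' ℂ H) := by
    rw [← TensorProduct.map_comp]
  rw [decomp, LinearMap.comp_apply]
  have : comul (R := ℂ) (x ⊗ₜ[ℂ] y)
      = tensorTensorTensorComm ℂ H H H H (comul x ⊗ₜ[ℂ] comul y) := rfl
  rw [this, mapmul_ttc, ← Bialgebra.comul_mul, cv_apply]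

end Hopf

end LogDerivAux
open LogDerivAux


/-- **The logarithmic derivative is an infinitesimal character.**  Let `H` be a
commutative Hopf algebra over ℂ, `K` a commutative unital ℂ-algebra with a ℂ-linear
derivation `δ`, and `g : H → K` a ℂ-algebra homomorphism.  Then
`D(g) = (g ∘ S) ⋆ (δ ∘ g)` satisfies `D(g)(xy) = D(g)(x) ε(y) + ε(x) D(g)(y)` for all
`x, y ∈ H`. -/
theorem logarithmic_derivative_infinitesimal_character
    {H K : Type} [CommRing H] [HopfAlgebra ℂ H] [CommRing K] [Algebra ℂ K]
    (δ : Derivation ℂ K K) (g : H →ₐ[ℂ] K) :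
    ∀ x y : H,
      hopfLogDeriv δ g (x * y) =
        hopfLogDeriv δ g x * algebraMap ℂ K (Coalgebra.counit (R := ℂ) y)
          + algebraMap ℂ K (Coalgebra.counit (R := ℂ) x) * hopfLogDeriv δ g y := by
  intro x y
  have gD : cv g.toLinearMap
      (cv (g.toLinearMap ∘ₗ HopfAlgebra.antipode (R := ℂ)) (δ.toLinearMap ∘ₗ g.toLinearMap))
      = δ.toLinearMap ∘ₗ g.toLinearMap := by
    rw [← cv_assoc, cv_g_sg, cv_cu_left]
  have hf : cv (tp (g.toLinearMap ∘ₗ HopfAlgebra.antipode (R := ℂ))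
        (g.toLinearMap ∘ₗ HopfAlgebra.antipode (R := ℂ)))
      (tp g.toLinearMap g.toLinearMap) = (cu : H ⊗[ℂ] H →ₗ[ℂ] K) := by
    rw [cv_tp, cv_sg_g, ← cu_tp]
  have leib : (δ.toLinearMap ∘ₗ g.toLinearMap) ∘ₗ LinearMap.mul' ℂ H
      = tp (δ.toLinearMap ∘ₗ g.toLinearMap) g.toLinearMap
        + tp g.toLinearMap (δ.toLinearMap ∘ₗ g.toLinearMap) := by
    ext a b
    simp [tp, Derivation.leibniz]
    ring
  have fPhi : cv (tp g.toLinearMap g.toLinearMap)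
      ((cv (g.toLinearMap ∘ₗ HopfAlgebra.antipode (R := ℂ)) (δ.toLinearMap ∘ₗ g.toLinearMap))
        ∘ₗ LinearMap.mul' ℂ H)
      = tp (δ.toLinearMap ∘ₗ g.toLinearMap) g.toLinearMap
        + tp g.toLinearMap (δ.toLinearMap ∘ₗ g.toLinearMap) := by
    rw [← g_comp_mul, cv_comp_mul, gD, leib]
  have fPsi : cv (tp g.toLinearMap g.toLinearMap)
      (tp (cv (g.toLinearMap ∘ₗ HopfAlgebra.antipode (R := ℂ)) (δ.toLinearMap ∘ₗ g.toLinearMap)) cu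
        + tp cu (cv (g.toLinearMap ∘ₗ HopfAlgebra.antipode (R := ℂ))
            (δ.toLinearMap ∘ₗ g.toLinearMap)))
      = tp (δ.toLinearMap ∘ₗ g.toLinearMap) g.toLinearMap
        + tp g.toLinearMap (δ.toLinearMap ∘ₗ g.toLinearMap) := by
    rw [cv_add_right, cv_tp, cv_tp, gD, cv_cu_right]
  have key : (cv (g.toLinearMap ∘ₗ HopfAlgebra.antipode (R := ℂ))
        (δ.toLinearMap ∘ₗ g.toLinearMap)) ∘ₗ LinearMap.mul' ℂ H
      = tp (cv (g.toLinearMap ∘ₗ HopfAlgebra.antipode (R := ℂ))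
          (δ.toLinearMap ∘ₗ g.toLinearMap)) cu
        + tp cu (cv (g.toLinearMap ∘ₗ HopfAlgebra.antipode (R := ℂ))
            (δ.toLinearMap ∘ₗ g.toLinearMap)) := by
    set sg := g.toLinearMap ∘ₗ HopfAlgebra.antipode (R := ℂ)
    set g' := δ.toLinearMap ∘ₗ g.toLinearMap
    set hh := tp sg sg
    set f := tp g.toLinearMap g.toLinearMap
    set Phi := (cv sg g') ∘ₗ LinearMap.mul' ℂ H
    set Psi := tp (cv sg g') cu + tp cu (cv sg g')
    calc Phi = cv cu Phi := (cv_cu_left Phi).symm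
    _ = cv (cv hh f) Phi := by rw [hf]
    _ = cv hh (cv f Phi) := cv_assoc hh f Phi
    _ = cv hh (cv f Psi) := by rw [fPhi, fPsi]
    _ = cv (cv hh f) Psi := (cv_assoc hh f Psi).symm
    _ = Psi := by rw [hf, cv_cu_left]
  have hxy := LinearMap.congr_fun key (x ⊗ₜ[ℂ] y)
  simp only [LinearMap.comp_apply, LinearMap.mul'_apply, LinearMap.add_apply, tp_tmul] at hxy
  show cv (g.toLinearMap ∘ₗ HopfAlgebra.antipode (R := ℂ)) (δ.toLinearMap ∘ₗ g.toLinearMap) (x * y)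
    = cv (g.toLinearMap ∘ₗ HopfAlgebra.antipode (R := ℂ)) (δ.toLinearMap ∘ₗ g.toLinearMap) x
        * algebraMap ℂ K (Coalgebra.counit (R := ℂ) y)
      + algebraMap ℂ K (Coalgebra.counit (R := ℂ) x)
        * cv (g.toLinearMap ∘ₗ HopfAlgebra.antipode (R := ℂ)) (δ.toLinearMap ∘ₗ g.toLinearMap) y
  simpa [cu] using hxy


end
end
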